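/- arXiv:1307.6041 — 5 statements merged into one kernel-verified Lean document; each statement's English description precedes it below -/
import Mathlib

section
/- Let n, n_{v1}, n_{v2}, n_y be positive integers and set n_v = n_{v1} + n_{v2}. Let A ∈ ℝ^{n×n}, B ∈ ℝ^{n×n_{v1}}, C ∈ ℝ^{n_y×n}, D ∈ ℝ^{n_y×n_{v2}}. Assume: (1) A is Hurwitz; (2) there exists F ∈ ℝ^{n_{v1}×n} such that -A + BF is Hurwitz; (3) D has full row rank n_y. Then there exist real matrices A_1, A_2 ∈ ℝ^{n×n}, B_1, B_3 ∈ ℝ^{n×n_{v1}}, B_2, B_4 ∈ ℝ^{n×n_{v2}}, C_1, C_2 ∈ ℝ^{n_y×n}, D_1, D_3 ∈ ℝ^{n_y×n_{v1}}, D_2, D_4 ∈ ℝ^{n_y×n_{v2}} such that the block matrices Ã = [[A, 0],[A_1, A_2]] ∈ ℝ^{2n×2n}, B̃ = [[B, 0, 0, 0],[B_1, B_2, B_3, B_4]] ∈ ℝ^{2n×2n_v}, C̃ = [[C, 0],[C_1, C_2]] ∈ ℝ^{2n_y×2n}, D̃ = [[0, D, 0, 0],[D_1, D_2, D_3, D_4]]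 ∈ ℝ^{2n_y×2n_v} satisfy: (i) Ã is Hurwitz; (ii) Ã J_n + J_n Ãᵀ + B̃ J_{n_v} B̃ᵀ = 0; (iii) B̃ J_{n_v} D̃ᵀ = -J_n C̃ᵀ; (iv) D̃ J_{n_v} D̃ᵀ = J_{n_y}; (v) for every s ∈ ℂ such that the complexifications of sI_{2n} - Ã and sI_n - A are invertible, the submatrix of C̃(sI_{2n} - Ã)^{-1}B̃ + D̃ consisting of its first n_y rows and first n_v columns equals the n_y × n_v matrix whose first n_{v1} columns are C(sI_n - A)^{-1}B and whose last n_{v2} columns are D (all matrices regarded as complex via entrywise inclusion ℝ ↪ ℂ). -/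
/-!
Augment the classical system by a second copy of the state with the dynamics
`(-A + B F)ᵀ`, driven only by the new noise channels. Then `Ã = diag(A, (-A + B F)ᵀ)` is Hurwitz
because both diagonal blocks are, and with `E` a right inverse of `D` (which exists because `D`
has full row rank) the remaining blocks `B₃ = -Fᵀ`, `B₄ = -(E C)ᵀ`, `D₄ = Eᵀ` make the three
physical-realizability identities reduce to `A + (-A + B F) - B F = 0` and `D E = 1`.
Since `Ã` is block lower triangular and the first output row of `C̃` does not see the second
copy, the `(1,1)` block of the transfer function is that of `(A, B, C, D)`.
-/

open Matrix

noncomputable section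

/-- `Jmat k` is the `2k × 2k` real matrix `[[0, I],[-I, 0]]` in block form. -/
def Jmat (k : Type*) [Fintype k] [DecidableEq k] : Matrix (k ⊕ k) (k ⊕ k) ℝ :=
  Matrix.fromBlocks 0 1 (-1) 0

/-- A real square matrix is Hurwitz if every eigenvalue of its complexification
has negative real part. -/
def IsHurwitz {k : Type*} [Fintype k] [DecidableEq k] (M : Matrix k k ℝ) : Prop :=
  ∀ z ∈ spectrum ℂ (M.map (algebraMap ℝ ℂ)), z.re < 0

/-- Entrywise complexification of a real matrix. -/
def cx {k l : Type*} (M : Matrix k l ℝ) : Matrix k l ℂ :=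
  M.map (algebraMap ℝ ℂ)

namespace Matrix

variable {R : Type*} {m p : Type*} [DecidableEq m] [DecidableEq p]

lemma smul_one_sub_fromBlocks_zero₁₂ [CommRing R] (s : R) (M : Matrix m m R)
    (P : Matrix p m R) (N : Matrix p p R) :
    s • (1 : Matrix (m ⊕ p) (m ⊕ p) R) - fromBlocks M 0 P N
      = fromBlocks (s • 1 - M) 0 (-P) (s • 1 - N) := by
  rw [← fromBlocks_one, fromBlocks_smul]
  ext (i | i) (j | j) <;> simp

variable [Fintype m] [Fintype p]

lemma spectrum_fromBlocks_zero₁₂ [CommRing R] (M : Matrix m m R) (P : Matrix p m R)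
    (N : Matrix p p R) :
    spectrum R (fromBlocks M 0 P N) = spectrum R M ∪ spectrum R N := by
  ext z
  simp only [spectrum.mem_iff, Algebra.algebraMap_eq_smul_one, smul_one_sub_fromBlocks_zero₁₂,
    isUnit_fromBlocks_zero₁₂, Set.mem_union, not_and_or]

lemma spectrum_transpose [CommRing R] (M : Matrix m m R) : spectrum R Mᵀ = spectrum R M := by
  ext z
  rw [spectrum.mem_iff, spectrum.mem_iff, ← isUnit_transpose, transpose_sub,
    Algebra.algebraMap_eq_smul_one, transpose_smul, transpose_one, transpose_transpose]

lemma toBlocks₁₁_transfer_fromBlocks_zero₁₂ [Field R] {q r u v : Type*}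
    (s : R) (A : Matrix m m R) (A₁ : Matrix p m R) (A₂ : Matrix p p R)
    (B : Matrix m u R) (B' : Matrix m v R) (B₁ : Matrix p u R) (B₂ : Matrix p v R)
    (C : Matrix q m R) (C₁ : Matrix r m R) (C₂ : Matrix r p R)
    (D : Matrix q u R) (D' : Matrix q v R) (D₁ : Matrix r u R) (D₂ : Matrix r v R)
    (hs : IsUnit (s • (1 : Matrix (m ⊕ p) (m ⊕ p) R) - fromBlocks A 0 A₁ A₂)) :
    (fromBlocks C 0 C₁ C₂ * (s • (1 : Matrix (m ⊕ p) (m ⊕ p) R) - fromBlocks A 0 A₁ A₂)⁻¹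
        * fromBlocks B B' B₁ B₂ + fromBlocks D D' D₁ D₂).toBlocks₁₁
      = C * (s • 1 - A)⁻¹ * B + D := by
  rw [smul_one_sub_fromBlocks_zero₁₂] at hs ⊢
  obtain ⟨hA, hA₂⟩ := isUnit_fromBlocks_zero₁₂.mp hs
  rw [inv_fromBlocks_zero₁₂_of_isUnit_iff _ _ _ (iff_of_true hA hA₂)]
  simp [fromBlocks_multiply, fromBlocks_add]

end Matrix

lemma Matrix.exists_mul_eq_one_of_rank_eq {R m p : Type*} [Field R] [LinearOrder R]
    [IsStrictOrderedRing R] [Fintype m] [Fintype p] [DecidableEq m]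
    (D : Matrix m p R) (hD : D.rank = Fintype.card m) :
    ∃ E : Matrix p m R, D * E = 1 := by
  have hrange : LinearMap.range (D * Dᵀ).mulVecLin = ⊤ := by
    apply Submodule.eq_top_of_finrank_eq
    rw [← rank, rank_self_mul_transpose, hD, Module.finrank_fintype_fun_eq_card]
  have hunit : IsUnit (D * Dᵀ) :=
    mulVec_surjective_iff_isUnit.mp (LinearMap.range_eq_top.mp hrange)
  refine ⟨Dᵀ * (D * Dᵀ)⁻¹, ?_⟩
  rw [← Matrix.mul_assoc, mul_nonsing_inv _ ((isUnit_iff_isUnit_det _).mp hunit)]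

section Hurwitz

variable {m p : Type*} [Fintype m] [Fintype p] [DecidableEq m] [DecidableEq p]

lemma IsHurwitz.transpose {M : Matrix m m ℝ} (hM : IsHurwitz M) : IsHurwitz Mᵀ := by
  intro z hz
  rw [transpose_map, spectrum_transpose] at hz
  exact hM z hz

lemma IsHurwitz.fromBlocks_zero₁₂ {M : Matrix m m ℝ} {N : Matrix p p ℝ} (hM : IsHurwitz M)
    (hN : IsHurwitz N) (P : Matrix p m ℝ) : IsHurwitz (fromBlocks M 0 P N) := by
  intro z hz
  rw [fromBlocks_map, Matrix.map_zero _ (map_zero _), spectrum_fromBlocks_zero₁₂] at hz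
  exact hz.elim (hM z) (hN z)

end Hurwitz

lemma cx_fromBlocks {a b c d : Type*} (M : Matrix a c ℝ) (N : Matrix a d ℝ)
    (P : Matrix b c ℝ) (Q : Matrix b d ℝ) :
    cx (fromBlocks M N P Q) = fromBlocks (cx M) (cx N) (cx P) (cx Q) :=
  fromBlocks_map M N P Q _

lemma cx_fromCols {a b c : Type*} (M : Matrix a b ℝ) (N : Matrix a c ℝ) :
    cx (fromCols M N) = fromCols (cx M) (cx N) :=
  fromCols_map M N _

@[simp] lemma cx_zero {a b : Type*} : cx (0 : Matrix a b ℝ) = 0 :=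
  Matrix.map_zero _ (map_zero _)

section Jmat

variable {k m m' p p' : Type*} [Fintype k] [DecidableEq k]

lemma fromBlocks_diag_mul_Jmat (X : Matrix m k ℝ) (X' : Matrix m' k ℝ) :
    fromBlocks X 0 0 X' * Jmat k = fromBlocks 0 X (-X') 0 := by
  simp [Jmat, fromBlocks_multiply]

lemma Jmat_mul_transpose_fromBlocks_diag (Y : Matrix p k ℝ) (Y' : Matrix p' k ℝ) :
    Jmat k * (fromBlocks Y 0 0 Y')ᵀ = fromBlocks 0 Y'ᵀ (-Yᵀ) 0 := by
  simp [Jmat, fromBlocks_transpose, fromBlocks_multiply]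

lemma fromBlocks_diag_mul_Jmat_mul_transpose (X : Matrix m k ℝ) (X' : Matrix m' k ℝ)
    (Y : Matrix p k ℝ) (Y' : Matrix p' k ℝ) :
    fromBlocks X 0 0 X' * Jmat k * (fromBlocks Y 0 0 Y')ᵀ
      = fromBlocks 0 (X * Y'ᵀ) (-(X' * Yᵀ)) 0 := by
  simp [fromBlocks_diag_mul_Jmat, fromBlocks_transpose, fromBlocks_multiply]

end Jmat

theorem stmt_0_general (n nv1 nv2 ny : ℕ) (A : Matrix (Fin n) (Fin n) ℝ) (B : Matrix (Fin n) (Fin nv1) ℝ)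
    (C : Matrix (Fin ny) (Fin n) ℝ) (D : Matrix (Fin ny) (Fin nv2) ℝ)
    (hA : IsHurwitz A)
    (hstab : ∃ F : Matrix (Fin nv1) (Fin n) ℝ, IsHurwitz (-A + B * F))
    (hD : D.rank = ny) :
    ∃ (A₁ A₂ : Matrix (Fin n) (Fin n) ℝ)
      (B₁ B₃ : Matrix (Fin n) (Fin nv1) ℝ) (B₂ B₄ : Matrix (Fin n) (Fin nv2) ℝ)
      (C₁ C₂ : Matrix (Fin ny) (Fin n) ℝ)
      (D₁ D₃ : Matrix (Fin ny) (Fin nv1) ℝ) (D₂ D₄ : Matrix (Fin ny) (Fin nv2) ℝ),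
      let Atil : Matrix (Fin n ⊕ Fin n) (Fin n ⊕ Fin n) ℝ := Matrix.fromBlocks A 0 A₁ A₂
      let Btil : Matrix (Fin n ⊕ Fin n) ((Fin nv1 ⊕ Fin nv2) ⊕ (Fin nv1 ⊕ Fin nv2)) ℝ :=
        Matrix.fromBlocks (Matrix.fromCols B 0) 0
          (Matrix.fromCols B₁ B₂) (Matrix.fromCols B₃ B₄)
      let Ctil : Matrix (Fin ny ⊕ Fin ny) (Fin n ⊕ Fin n) ℝ := Matrix.fromBlocks C 0 C₁ C₂
      let Dtil : Matrix (Fin ny ⊕ Fin ny) ((Fin nv1 ⊕ Fin nv2) ⊕ (Fin nv1 ⊕ Fin nv2)) ℝ :=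
        Matrix.fromBlocks (Matrix.fromCols 0 D) 0
          (Matrix.fromCols D₁ D₂) (Matrix.fromCols D₃ D₄)
      IsHurwitz Atil ∧
      Atil * Jmat (Fin n) + Jmat (Fin n) * Atilᵀ
          + Btil * Jmat (Fin nv1 ⊕ Fin nv2) * Btilᵀ = 0 ∧
      Btil * Jmat (Fin nv1 ⊕ Fin nv2) * Dtilᵀ = -(Jmat (Fin n) * Ctilᵀ) ∧
      Dtil * Jmat (Fin nv1 ⊕ Fin nv2) * Dtilᵀ = Jmat (Fin ny) ∧
      ∀ s : ℂ,
        IsUnit (s • (1 : Matrix (Fin n ⊕ Fin n) (Fin n ⊕ Fin n) ℂ) - cx Atil) →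
        IsUnit (s • (1 : Matrix (Fin n) (Fin n) ℂ) - cx A) →
        (cx Ctil
            * (s • (1 : Matrix (Fin n ⊕ Fin n) (Fin n ⊕ Fin n) ℂ) - cx Atil)⁻¹
            * cx Btil + cx Dtil).submatrix Sum.inl Sum.inl
          = Matrix.fromCols
              (cx C * (s • (1 : Matrix (Fin n) (Fin n) ℂ) - cx A)⁻¹ * cx B) (cx D) := by
  obtain ⟨F, hF⟩ := hstab
  obtain ⟨E, hE⟩ := D.exists_mul_eq_one_of_rank_eq (hD.trans (Fintype.card_fin ny).symm)
  refine ⟨0, -Aᵀ + Fᵀ * Bᵀ, 0, -Fᵀ, 0, -(E * C)ᵀ, 0, 0, 0, 0, 0, Eᵀ, ?_, ?_, ?_, ?_, ?_⟩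
  · have hF' : IsHurwitz (-Aᵀ + Fᵀ * Bᵀ) := by
      simpa [transpose_add, transpose_mul] using hF.transpose
    exact hA.fromBlocks_zero₁₂ hF' 0
  · rw [fromCols_zero, fromBlocks_diag_mul_Jmat, Jmat_mul_transpose_fromBlocks_diag,
      fromBlocks_diag_mul_Jmat_mul_transpose, fromBlocks_add, fromBlocks_add, ← fromBlocks_zero]
    simp [transpose_fromCols, fromCols_mul_fromRows]
  · rw [fromCols_zero, fromCols_zero, fromBlocks_diag_mul_Jmat_mul_transpose,
      Jmat_mul_transpose_fromBlocks_diag]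
    simp [transpose_fromCols, fromCols_mul_fromRows, ← transpose_mul, ← Matrix.mul_assoc, hE,
      fromBlocks_neg]
  · rw [fromCols_zero, fromBlocks_diag_mul_Jmat_mul_transpose]
    simp [Jmat, transpose_fromCols, fromCols_mul_fromRows, hE, ← transpose_mul]
  · intro s hs _
    simp only [cx_fromBlocks, cx_fromCols, cx_zero, fromCols_zero] at hs ⊢
    change toBlocks₁₁ _ = _
    rw [toBlocks₁₁_transfer_fromBlocks_zero₁₂ _ _ _ _ _ _ _ _ _ _ _ _ _ _ _ hs,
      mul_fromCols, Matrix.mul_zero]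
    ext i (j | j) <;> simp

theorem stmt_0 (n nv1 nv2 ny : ℕ) (hn : 0 < n) (hv1 : 0 < nv1) (hv2 : 0 < nv2) (hy : 0 < ny)
    (A : Matrix (Fin n) (Fin n) ℝ) (B : Matrix (Fin n) (Fin nv1) ℝ)
    (C : Matrix (Fin ny) (Fin n) ℝ) (D : Matrix (Fin ny) (Fin nv2) ℝ)
    (hA : IsHurwitz A)
    (hstab : ∃ F : Matrix (Fin nv1) (Fin n) ℝ, IsHurwitz (-A + B * F))
    (hD : D.rank = ny) :
    ∃ (A₁ A₂ : Matrix (Fin n) (Fin n) ℝ)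
      (B₁ B₃ : Matrix (Fin n) (Fin nv1) ℝ) (B₂ B₄ : Matrix (Fin n) (Fin nv2) ℝ)
      (C₁ C₂ : Matrix (Fin ny) (Fin n) ℝ)
      (D₁ D₃ : Matrix (Fin ny) (Fin nv1) ℝ) (D₂ D₄ : Matrix (Fin ny) (Fin nv2) ℝ),
      let Atil : Matrix (Fin n ⊕ Fin n) (Fin n ⊕ Fin n) ℝ := Matrix.fromBlocks A 0 A₁ A₂
      let Btil : Matrix (Fin n ⊕ Fin n) ((Fin nv1 ⊕ Fin nv2) ⊕ (Fin nv1 ⊕ Fin nv2)) ℝ :=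
        Matrix.fromBlocks (Matrix.fromCols B 0) 0
          (Matrix.fromCols B₁ B₂) (Matrix.fromCols B₃ B₄)
      let Ctil : Matrix (Fin ny ⊕ Fin ny) (Fin n ⊕ Fin n) ℝ := Matrix.fromBlocks C 0 C₁ C₂
      let Dtil : Matrix (Fin ny ⊕ Fin ny) ((Fin nv1 ⊕ Fin nv2) ⊕ (Fin nv1 ⊕ Fin nv2)) ℝ :=
        Matrix.fromBlocks (Matrix.fromCols 0 D) 0
          (Matrix.fromCols D₁ D₂) (Matrix.fromCols D₃ D₄)
      IsHurwitz Atil ∧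
      Atil * Jmat (Fin n) + Jmat (Fin n) * Atilᵀ
          + Btil * Jmat (Fin nv1 ⊕ Fin nv2) * Btilᵀ = 0 ∧
      Btil * Jmat (Fin nv1 ⊕ Fin nv2) * Dtilᵀ = -(Jmat (Fin n) * Ctilᵀ) ∧
      Dtil * Jmat (Fin nv1 ⊕ Fin nv2) * Dtilᵀ = Jmat (Fin ny) ∧
      ∀ s : ℂ,
        IsUnit (s • (1 : Matrix (Fin n ⊕ Fin n) (Fin n ⊕ Fin n) ℂ) - cx Atil) →
        IsUnit (s • (1 : Matrix (Fin n) (Fin n) ℂ) - cx A) →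
        (cx Ctil
            * (s • (1 : Matrix (Fin n ⊕ Fin n) (Fin n ⊕ Fin n) ℂ) - cx Atil)⁻¹
            * cx Btil + cx Dtil).submatrix Sum.inl Sum.inl
          = Matrix.fromCols
              (cx C * (s • (1 : Matrix (Fin n) (Fin n) ℂ) - cx A)⁻¹ * cx B) (cx D) :=
  stmt_0_general n nv1 nv2 ny A B C D hA hstab hD
end
end

section
/- Let n, n_{v1}, n_{v2} be positive integers and n_v = n_{v1} + n_{v2}. Let A, A_1, A_2 ∈ ℝ^{n×n}, B, B_1, B_3 ∈ ℝ^{n×n_{v1}}, B_2, B_4 ∈ ℝ^{n×n_{v2}}, and form Ã = [[A, 0],[A_1, A_2]] ∈ ℝ^{2n×2n} and B̃ = [[B, 0, 0, 0],[B_1, B_2, B_3, B_4]] ∈ ℝ^{2n×2n_v} (block columns of widths n_{v1}, n_{v2}, n_{v1}, n_{v2}). Then Ã J_n + J_n Ãᵀ + B̃ J_{n_v} B̃ᵀ = 0 holds if and only if both A + A_2ᵀ + B B_3ᵀ = 0 and A_1 - A_1ᵀ + B_1 B_3ᵀ + B_2 B_4ᵀ - B_3 B_1ᵀ - B_4 B_2ᵀ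 = 0. -/
open Matrix

/-
Writing `Ã J = Ã J Iᵀ` and `J Ãᵀ = I J Ãᵀ`, all three terms are products `M J Nᵀ` of block
lower triangular matrices and can be computed blockwise. The sum has the form
`[[0, S], [-Sᵀ, T]]` with `S`, `T` the two left-hand sides, so it vanishes iff `S = T = 0`.
-/

theorem fromBlocks_mul_Jmat_mul_transpose_fromBlocks {m₁ m₂ n₁ n₂ k : Type*}
    [Fintype k] [DecidableEq k] (P : Matrix m₁ k ℝ) (Q R : Matrix m₂ k ℝ)
    (P' : Matrix n₁ k ℝ) (Q' R' : Matrix n₂ k ℝ) :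
    fromBlocks P 0 Q R * Jmat k * (fromBlocks P' 0 Q' R')ᵀ
      = fromBlocks 0 (P * R'ᵀ) (-(R * P'ᵀ)) (Q * R'ᵀ - R * Q'ᵀ) := by
  simp only [Jmat, fromBlocks_multiply, fromBlocks_transpose, transpose_zero, Matrix.mul_zero,
    Matrix.zero_mul, Matrix.mul_one, Matrix.mul_neg, Matrix.neg_mul, add_zero, zero_add, neg_zero]
  congr 1
  abel

theorem fromBlocks_zero_neg_transpose_eq_zero_iff {m R : Type*} [AddCommGroup R]
    (S T : Matrix m m R) : fromBlocks 0 S (-Sᵀ) T = 0 ↔ S = 0 ∧ T = 0 := by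
  rw [← fromBlocks_zero, fromBlocks_inj]
  simp only [neg_eq_zero, transpose_eq_zero, true_and]
  tauto

theorem stmt_1_general (n nv1 nv2 : ℕ)
    (A A₁ A₂ : Matrix (Fin n) (Fin n) ℝ)
    (B B₁ B₃ : Matrix (Fin n) (Fin nv1) ℝ) (B₂ B₄ : Matrix (Fin n) (Fin nv2) ℝ) :
    (Matrix.fromBlocks A 0 A₁ A₂ * Jmat (Fin n)
        + Jmat (Fin n) * (Matrix.fromBlocks A 0 A₁ A₂)ᵀ
        + Matrix.fromBlocks (Matrix.fromCols B 0) 0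
            (Matrix.fromCols B₁ B₂) (Matrix.fromCols B₃ B₄)
          * Jmat (Fin nv1 ⊕ Fin nv2)
          * (Matrix.fromBlocks (Matrix.fromCols B 0) 0
              (Matrix.fromCols B₁ B₂) (Matrix.fromCols B₃ B₄))ᵀ = 0)
    ↔ (A + A₂ᵀ + B * B₃ᵀ = 0 ∧
        A₁ - A₁ᵀ + B₁ * B₃ᵀ + B₂ * B₄ᵀ - B₃ * B₁ᵀ - B₄ * B₂ᵀ = 0) := by
  set S := A + A₂ᵀ + B * B₃ᵀ
  set T := A₁ - A₁ᵀ + B₁ * B₃ᵀ + B₂ * B₄ᵀ - B₃ * B₁ᵀ - B₄ * B₂ᵀ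
  have hI : (1 : Matrix (Fin n ⊕ Fin n) (Fin n ⊕ Fin n) ℝ) = fromBlocks 1 0 0 1 :=
    fromBlocks_one.symm
  have hsum : fromBlocks A 0 A₁ A₂ * Jmat (Fin n) * 1ᵀ
      + 1 * Jmat (Fin n) * (fromBlocks A 0 A₁ A₂)ᵀ
      + fromBlocks (fromCols B 0) 0 (fromCols B₁ B₂) (fromCols B₃ B₄)
        * Jmat (Fin nv1 ⊕ Fin nv2)
        * (fromBlocks (fromCols B 0) 0 (fromCols B₁ B₂) (fromCols B₃ B₄))ᵀ
      = fromBlocks 0 S (-Sᵀ) T := by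
    rw [hI, fromBlocks_mul_Jmat_mul_transpose_fromBlocks,
      fromBlocks_mul_Jmat_mul_transpose_fromBlocks, fromBlocks_mul_Jmat_mul_transpose_fromBlocks]
    simp only [fromBlocks_add, transpose_fromCols, fromCols_mul_fromRows, transpose_add,
      transpose_mul, transpose_transpose, transpose_one, transpose_zero, Matrix.mul_one,
      Matrix.one_mul, Matrix.mul_zero, Matrix.zero_mul, add_zero, S, T]
    congr 1 <;> abel
  rw [transpose_one, mul_one, one_mul] at hsum
  rw [hsum, fromBlocks_zero_neg_transpose_eq_zero_iff]

theorem stmt_1 (n nv1 nv2 : ℕ) (hn : 0 < n) (hv1 : 0 < nv1) (hv2 : 0 < nv2)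
    (A A₁ A₂ : Matrix (Fin n) (Fin n) ℝ)
    (B B₁ B₃ : Matrix (Fin n) (Fin nv1) ℝ) (B₂ B₄ : Matrix (Fin n) (Fin nv2) ℝ) :
    (Matrix.fromBlocks A 0 A₁ A₂ * Jmat (Fin n)
        + Jmat (Fin n) * (Matrix.fromBlocks A 0 A₁ A₂)ᵀ
        + Matrix.fromBlocks (Matrix.fromCols B 0) 0
            (Matrix.fromCols B₁ B₂) (Matrix.fromCols B₃ B₄)
          * Jmat (Fin nv1 ⊕ Fin nv2)
          * (Matrix.fromBlocks (Matrix.fromCols B 0) 0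
              (Matrix.fromCols B₁ B₂) (Matrix.fromCols B₃ B₄))ᵀ = 0)
    ↔ (A + A₂ᵀ + B * B₃ᵀ = 0 ∧
        A₁ - A₁ᵀ + B₁ * B₃ᵀ + B₂ * B₄ᵀ - B₃ * B₁ᵀ - B₄ * B₂ᵀ = 0) :=
  stmt_1_general n nv1 nv2 A A₁ A₂ B B₁ B₃ B₂ B₄
end

section
/- Let n_{v1}, n_{v2}, n_y be positive integers and n_v = n_{v1} + n_{v2}. Let D, D_2, D_4 ∈ ℝ^{n_y×n_{v2}}, D_1, D_3 ∈ ℝ^{n_y×n_{v1}}, and form D̃ = [[0, D, 0, 0],[D_1, D_2, D_3, D_4]] ∈ ℝ^{2n_y×2n_v} (block columns of widths n_{v1}, n_{v2}, n_{v1}, n_{v2}). Then D̃ J_{n_v} D̃ᵀ = J_{n_y} holds if and only if both D D_4ᵀ = I_{n_y} and D_1 D_3ᵀ + D_2 D_4ᵀ - D_3 D_1ᵀ - D_4 D_2ᵀ = 0. -/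
open Matrix

section Symplectic

variable {m n : Type*} [Fintype n] [DecidableEq n]

theorem fromBlocks_mul_Jmat_mul_transpose (A B C E : Matrix m n ℝ) :
    fromBlocks A B C E * Jmat n * (fromBlocks A B C E)ᵀ =
      fromBlocks (A * Bᵀ - B * Aᵀ) (A * Eᵀ - B * Cᵀ)
        (C * Bᵀ - E * Aᵀ) (C * Eᵀ - E * Cᵀ) := by
  simp only [Jmat, fromBlocks_transpose, fromBlocks_multiply, Matrix.mul_zero,
    Matrix.mul_one, Matrix.mul_neg, Matrix.neg_mul, add_zero, zero_add]
  congr 1 <;> abel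

variable [Fintype m] [DecidableEq m]

theorem fromBlocks_mul_Jmat_mul_transpose_eq_Jmat_iff (A B C E : Matrix m n ℝ) :
    fromBlocks A B C E * Jmat n * (fromBlocks A B C E)ᵀ = Jmat m ↔
      A * Bᵀ - B * Aᵀ = 0 ∧ A * Eᵀ - B * Cᵀ = 1 ∧ C * Eᵀ - E * Cᵀ = 0 := by
  rw [fromBlocks_mul_Jmat_mul_transpose, Jmat, fromBlocks_inj]
  refine ⟨fun ⟨hAB, hAE, _, hCE⟩ => ⟨hAB, hAE, hCE⟩, fun ⟨hAB, hAE, hCE⟩ => ⟨hAB, hAE, ?_, hCE⟩⟩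
  have hCB : C * Bᵀ - E * Aᵀ = -(A * Eᵀ - B * Cᵀ)ᵀ := by
    simp only [transpose_sub, transpose_mul, transpose_transpose, neg_sub]
  rw [hCB, hAE, transpose_one]

end Symplectic

theorem stmt_2_general (nv1 nv2 ny : ℕ)
    (D D₂ D₄ : Matrix (Fin ny) (Fin nv2) ℝ) (D₁ D₃ : Matrix (Fin ny) (Fin nv1) ℝ) :
    (Matrix.fromBlocks (Matrix.fromCols 0 D) 0
        (Matrix.fromCols D₁ D₂) (Matrix.fromCols D₃ D₄)
      * Jmat (Fin nv1 ⊕ Fin nv2)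
      * (Matrix.fromBlocks (Matrix.fromCols 0 D) 0
          (Matrix.fromCols D₁ D₂) (Matrix.fromCols D₃ D₄))ᵀ = Jmat (Fin ny))
    ↔ (D * D₄ᵀ = 1 ∧ D₁ * D₃ᵀ + D₂ * D₄ᵀ - D₃ * D₁ᵀ - D₄ * D₂ᵀ = 0) := by
  rw [fromBlocks_mul_Jmat_mul_transpose_eq_Jmat_iff]
  simp only [transpose_fromCols, fromCols_mul_fromRows, transpose_zero, Matrix.mul_zero,
    Matrix.zero_mul, zero_add, sub_zero, true_and]
  rw [sub_add_eq_sub_sub]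

theorem stmt_2 (nv1 nv2 ny : ℕ) (hv1 : 0 < nv1) (hv2 : 0 < nv2) (hy : 0 < ny)
    (D D₂ D₄ : Matrix (Fin ny) (Fin nv2) ℝ) (D₁ D₃ : Matrix (Fin ny) (Fin nv1) ℝ) :
    (Matrix.fromBlocks (Matrix.fromCols 0 D) 0
        (Matrix.fromCols D₁ D₂) (Matrix.fromCols D₃ D₄)
      * Jmat (Fin nv1 ⊕ Fin nv2)
      * (Matrix.fromBlocks (Matrix.fromCols 0 D) 0
          (Matrix.fromCols D₁ D₂) (Matrix.fromCols D₃ D₄))ᵀ = Jmat (Fin ny))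
    ↔ (D * D₄ᵀ = 1 ∧ D₁ * D₃ᵀ + D₂ * D₄ᵀ - D₃ * D₁ᵀ - D₄ * D₂ᵀ = 0) :=
  stmt_2_general nv1 nv2 ny D D₂ D₄ D₁ D₃
end

section
/- Let n, n_{v1}, n_{v2}, n_y be positive integers, n_v = n_{v1} + n_{v2}. Let A, A_1, A_2 ∈ ℝ^{n×n}, B, B_1, B_3 ∈ ℝ^{n×n_{v1}}, B_2, B_4 ∈ ℝ^{n×n_{v2}}, C, C_1, C_2 ∈ ℝ^{n_y×n}, D, D_2, D_4 ∈ ℝ^{n_y×n_{v2}}, D_1, D_3 ∈ ℝ^{n_y×n_{v1}}. Form Ã = [[A, 0],[A_1, A_2]], B̃ = [[B, 0, 0, 0],[B_1, B_2, B_3, B_4]], C̃ = [[C, 0],[C_1, C_2]], D̃ = [[0, D, 0, 0],[D_1, D_2, D_3, D_4]] (block columns of B̃ and D̃ of widths n_{v1}, n_{v2}, n_{v1}, n_{v2}). Then for every s ∈ ℂ such that the complexifications of sI_n - A and sI_n - A_2 are both invertible, the matrix sI_{2n} - Ã (complexified) is invertible and the submatrix of C̃(sI_{2n} - Ã)^{-1}B̃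 + D̃ formed by its first n_y rows and its first n_v columns equals the n_y×n_v matrix whose first n_{v1} columns are C(sI_n - A)^{-1}B and whose last n_{v2} columns are D (real matrices regarded as complex via entrywise inclusion ℝ ↪ ℂ). -/
open Matrix

noncomputable section

/-!
Both the state matrix Ã and the input and output matrices B̃, C̃ are block lower triangular,
so the pencil sI - Ã and its inverse are too, and the top-left block of C̃(sI - Ã)⁻¹B̃ only
sees the top-left blocks C, (sI - A)⁻¹ and [B, 0]; adding the top-left block [0, D] of D̃ gives
the classical transfer function [C(sI - A)⁻¹B, D].
-/

namespace Matrix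

variable {R : Type*} {k l m n p q : Type*}

lemma fromCols_add [Add R] (A₁ A₂ : Matrix m n R) (B₁ B₂ : Matrix m p R) :
    fromCols A₁ B₁ + fromCols A₂ B₂ = fromCols (A₁ + A₂) (B₁ + B₂) := by
  ext _ (_ | _) <;> rfl

lemma submatrix_inl_inl (M : Matrix (k ⊕ l) (m ⊕ n) R) :
    M.submatrix Sum.inl Sum.inl = M.toBlocks₁₁ :=
  rfl

lemma smul_one_sub_fromBlocks_zero₁₂_s9 [Ring R] [DecidableEq m] [DecidableEq n] (s : R)
    (A : Matrix m m R) (C : Matrix n m R) (D : Matrix n n R) :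
    s • (1 : Matrix (m ⊕ n) (m ⊕ n) R) - fromBlocks A 0 C D
      = fromBlocks (s • 1 - A) 0 (-C) (s • 1 - D) := by
  rw [← fromBlocks_one, fromBlocks_smul, sub_eq_add_neg, fromBlocks_neg, fromBlocks_add]
  simp [sub_eq_add_neg]

lemma toBlocks₁₁_mul_inv_mul_add_of_zero₁₂ [CommRing R] [Fintype m] [Fintype n]
    [DecidableEq m] [DecidableEq n] (C : Matrix k m R) (C₁ : Matrix l m R) (C₂ : Matrix l n R)
    (P : Matrix m m R) (Q : Matrix n m R) (S : Matrix n n R)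
    (B : Matrix m p R) (B₁ : Matrix n p R) (B₂ : Matrix n q R)
    (D : Matrix k p R) (D₁ : Matrix l p R) (D₂ : Matrix l q R) (hPS : IsUnit P ↔ IsUnit S) :
    (fromBlocks C 0 C₁ C₂ * (fromBlocks P 0 Q S)⁻¹ * fromBlocks B 0 B₁ B₂
        + fromBlocks D 0 D₁ D₂).toBlocks₁₁
      = C * P⁻¹ * B + D := by
  simp [inv_fromBlocks_zero₁₂_of_isUnit_iff P Q S hPS, fromBlocks_multiply, fromBlocks_add]

end Matrix

theorem stmt_9_general (n nv1 nv2 ny : ℕ)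
    (A A₁ A₂ : Matrix (Fin n) (Fin n) ℝ)
    (B B₁ B₃ : Matrix (Fin n) (Fin nv1) ℝ) (B₂ B₄ : Matrix (Fin n) (Fin nv2) ℝ)
    (C C₁ C₂ : Matrix (Fin ny) (Fin n) ℝ)
    (D D₂ D₄ : Matrix (Fin ny) (Fin nv2) ℝ) (D₁ D₃ : Matrix (Fin ny) (Fin nv1) ℝ) :
    ∀ s : ℂ,
      IsUnit (s • (1 : Matrix (Fin n) (Fin n) ℂ) - cx A) →
      IsUnit (s • (1 : Matrix (Fin n) (Fin n) ℂ) - cx A₂) →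
      IsUnit (s • (1 : Matrix (Fin n ⊕ Fin n) (Fin n ⊕ Fin n) ℂ)
          - cx (Matrix.fromBlocks A 0 A₁ A₂)) ∧
        (cx (Matrix.fromBlocks C 0 C₁ C₂)
            * (s • (1 : Matrix (Fin n ⊕ Fin n) (Fin n ⊕ Fin n) ℂ)
                - cx (Matrix.fromBlocks A 0 A₁ A₂))⁻¹
            * cx (Matrix.fromBlocks (Matrix.fromCols B 0) 0
                (Matrix.fromCols B₁ B₂) (Matrix.fromCols B₃ B₄))
          + cx (Matrix.fromBlocks (Matrix.fromCols 0 D) 0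
                (Matrix.fromCols D₁ D₂) (Matrix.fromCols D₃ D₄))).submatrix
            Sum.inl Sum.inl
        = Matrix.fromCols
            (cx C * (s • (1 : Matrix (Fin n) (Fin n) ℂ) - cx A)⁻¹ * cx B) (cx D) := by
  intro s hA hA₂
  simp only [cx, fromBlocks_map, fromCols_map, Matrix.map_zero _ (map_zero _)] at hA hA₂ ⊢
  rw [smul_one_sub_fromBlocks_zero₁₂_s9]
  refine ⟨isUnit_fromBlocks_zero₁₂.mpr ⟨hA, hA₂⟩, ?_⟩
  rw [submatrix_inl_inl,
    toBlocks₁₁_mul_inv_mul_add_of_zero₁₂ _ _ _ _ _ _ _ _ _ _ _ _ (iff_of_true hA hA₂),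
    mul_fromCols, fromCols_add, Matrix.mul_zero, add_zero, zero_add]

theorem stmt_9 (n nv1 nv2 ny : ℕ) (hn : 0 < n) (hv1 : 0 < nv1) (hv2 : 0 < nv2) (hy : 0 < ny)
    (A A₁ A₂ : Matrix (Fin n) (Fin n) ℝ)
    (B B₁ B₃ : Matrix (Fin n) (Fin nv1) ℝ) (B₂ B₄ : Matrix (Fin n) (Fin nv2) ℝ)
    (C C₁ C₂ : Matrix (Fin ny) (Fin n) ℝ)
    (D D₂ D₄ : Matrix (Fin ny) (Fin nv2) ℝ) (D₁ D₃ : Matrix (Fin ny) (Fin nv1) ℝ) :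
    ∀ s : ℂ,
      IsUnit (s • (1 : Matrix (Fin n) (Fin n) ℂ) - cx A) →
      IsUnit (s • (1 : Matrix (Fin n) (Fin n) ℂ) - cx A₂) →
      IsUnit (s • (1 : Matrix (Fin n ⊕ Fin n) (Fin n ⊕ Fin n) ℂ)
          - cx (Matrix.fromBlocks A 0 A₁ A₂)) ∧
        (cx (Matrix.fromBlocks C 0 C₁ C₂)
            * (s • (1 : Matrix (Fin n ⊕ Fin n) (Fin n ⊕ Fin n) ℂ)
                - cx (Matrix.fromBlocks A 0 A₁ A₂))⁻¹
            * cx (Matrix.fromBlocks (Matrix.fromCols B 0) 0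
                (Matrix.fromCols B₁ B₂) (Matrix.fromCols B₃ B₄))
          + cx (Matrix.fromBlocks (Matrix.fromCols 0 D) 0
                (Matrix.fromCols D₁ D₂) (Matrix.fromCols D₃ D₄))).submatrix
            Sum.inl Sum.inl
        = Matrix.fromCols
            (cx C * (s • (1 : Matrix (Fin n) (Fin n) ℂ) - cx A)⁻¹ * cx B) (cx D) :=
  stmt_9_general n nv1 nv2 ny A A₁ A₂ B B₁ B₃ B₂ B₄ C C₁ C₂ D D₂ D₄ D₁ D₃
end
end

section
/- Let n, m be positive integers, Ã ∈ ℝ^{2n×2n} and B̃ ∈ ℝ^{2n×2m}, and suppose Ã J_n + J_n Ãᵀ + B̃ J_m B̃ᵀ = 0. Then for every t ∈ ℝ, exp(t Ã) J_n exp(t Ãᵀ) + ∫₀ᵗ exp(s Ã) B̃ J_m B̃ᵀ exp(s Ãᵀ) ds = J_n, where exp denotes the matrix exponential and the integral is taken entrywise. -/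
open Matrix NormedSpace

noncomputable section

/-! By the condition `A J + J Aᵀ = -B J Bᵀ`, the derivative of `exp (u A) J exp (u Aᵀ)` is
`-exp (u A) B J Bᵀ exp (u Aᵀ)`, so the identity is the fundamental theorem of calculus on `[0, t]`.
Differentiating the matrix exponential needs a normed algebra structure on matrices; any will do,
and the `L∞` operator norm is used. -/

attribute [local instance] Matrix.linftyOpNormedAddCommGroup Matrix.linftyOpNormedSpace
  Matrix.linftyOpNormedRing Matrix.linftyOpNormedAlgebra

section Lyapunov

variable {𝔸 : Type*} [NormedRing 𝔸] [NormedAlgebra ℝ 𝔸] [CompleteSpace 𝔸]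

theorem hasDerivAt_exp_smul_mul_mul_exp_smul (A X C : 𝔸) (t : ℝ) :
    HasDerivAt (fun u : ℝ => exp (u • A) * X * exp (u • C))
      (exp (t • A) * (A * X + X * C) * exp (t • C)) t :=
  (((hasDerivAt_exp_smul_const A t).mul_const X).mul
    (hasDerivAt_exp_smul_const' C t)).congr_deriv (by noncomm_ring)

theorem continuous_exp_smul_mul_mul_exp_smul (A X C : 𝔸) :
    Continuous fun u : ℝ => exp (u • A) * X * exp (u • C) :=
  continuous_iff_continuousAt.2 fun t =>
    (hasDerivAt_exp_smul_mul_mul_exp_smul A X C t).continuousAt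

end Lyapunov

theorem HasDerivAt.matrix_elem {ι κ : Type*} [Fintype ι] [Fintype κ]
    {f : ℝ → Matrix ι κ ℝ} {f' : Matrix ι κ ℝ} {t : ℝ} (hf : HasDerivAt f f' t)
    (i : ι) (j : κ) : HasDerivAt (fun u => f u i j) (f' i j) t :=
  (entryLinearMap ℝ ℝ i j).toContinuousLinearMap.hasFDerivAt.comp_hasDerivAt t hf

theorem Matrix.integral_exp_smul_mul_mul_exp_smul_apply {ι : Type*} [Fintype ι] [DecidableEq ι]
    (A X C : Matrix ι ι ℝ) (t : ℝ) (i j : ι) :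
    ∫ u in (0 : ℝ)..t, (exp (u • A) * (A * X + X * C) * exp (u • C)) i j
      = (exp (t • A) * X * exp (t • C)) i j - X i j := by
  have hcont := ((continuous_exp_smul_mul_mul_exp_smul A (A * X + X * C) C).matrix_elem i j)
  refine (intervalIntegral.integral_eq_sub_of_hasDerivAt
    (fun u _ => (hasDerivAt_exp_smul_mul_mul_exp_smul A X C u).matrix_elem i j)
    (hcont.intervalIntegrable 0 t)).trans ?_
  simp only [zero_smul, exp_zero, one_mul, mul_one]
  -- the two sides differ only in the `Mul` instance: `Matrix.instMul` versus the `linftyOp` ring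
  rfl

theorem stmt_10_general (n m : ℕ)
    (Atil : Matrix (Fin n ⊕ Fin n) (Fin n ⊕ Fin n) ℝ)
    (Btil : Matrix (Fin n ⊕ Fin n) (Fin m ⊕ Fin m) ℝ)
    (h : Atil * Jmat (Fin n) + Jmat (Fin n) * Atilᵀ
        + Btil * Jmat (Fin m) * Btilᵀ = 0) :
    ∀ t : ℝ,
      NormedSpace.exp (t • Atil) * Jmat (Fin n) * NormedSpace.exp (t • Atilᵀ)
        + Matrix.of (fun i j =>
            ∫ u in (0 : ℝ)..t,
              (NormedSpace.exp (u • Atil) * (Btil * Jmat (Fin m) * Btilᵀ)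
                * NormedSpace.exp (u • Atilᵀ)) i j)
        = Jmat (Fin n) := by
  intro t
  have hK : Btil * Jmat (Fin m) * Btilᵀ = -(Atil * Jmat (Fin n) + Jmat (Fin n) * Atilᵀ) :=
    eq_neg_of_add_eq_zero_right h
  ext i j
  simp only [Matrix.add_apply, Matrix.of_apply, hK, mul_neg, neg_mul, Matrix.neg_apply,
    intervalIntegral.integral_neg, integral_exp_smul_mul_mul_exp_smul_apply]
  ring

theorem stmt_10 (n m : ℕ) (hn : 0 < n) (hm : 0 < m)
    (Atil : Matrix (Fin n ⊕ Fin n) (Fin n ⊕ Fin n) ℝ)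
    (Btil : Matrix (Fin n ⊕ Fin n) (Fin m ⊕ Fin m) ℝ)
    (h : Atil * Jmat (Fin n) + Jmat (Fin n) * Atilᵀ
        + Btil * Jmat (Fin m) * Btilᵀ = 0) :
    ∀ t : ℝ,
      NormedSpace.exp (t • Atil) * Jmat (Fin n) * NormedSpace.exp (t • Atilᵀ)
        + Matrix.of (fun i j =>
            ∫ u in (0 : ℝ)..t,
              (NormedSpace.exp (u • Atil) * (Btil * Jmat (Fin m) * Btilᵀ)
                * NormedSpace.exp (u • Atilᵀ)) i j)
        = Jmat (Fin n) :=
  stmt_10_general n m Atil Btil h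
end
end
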